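/- arXiv:2501.02653 — 2 statements merged into one kernel-verified Lean document; each statement's English description precedes it below -/
import Mathlib

section
/- Let n, d, t, ℓ be positive integers with 2 ≤ d and ℓ ≤ d, let γ ≥ 0, and let S_1,…,S_t be subsets of [n], each of size at most d. Let Z be a random vector in {0,1}^n such that for every set I ⊆ [n] with |I| ≤ ℓ, the marginal distribution of (Z_j)_{j∈I} is γ-close to the product distribution in which each coordinate equals 1 independently with probability 1/d. Then Pr[there exists i ∈ [t] with |{j ∈ S_i : Z_j = 1}| ≥ ℓ] ≤ t · C(d,ℓ) · (γ + (1/d)^ℓ). Consequently, if f = φ_1 ⊕ … ⊕ φ_t where each φ_i: {0,1}^n → {0,1} depends only on coordinates in S_i, then with probability at least 1 − t·C(d,ℓ)·(γ + (1/d)^ℓ) over Z, the following holds: for every u ∈ {0,1}^n, the function x ↦ f(y), where y_j = u_j if Z_j = 0 and y_j = x_j if Z_j = 1, is a parity (XOR) of t functions each depending on fewer than ℓ coordinates. -/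
/-- `p` is a probability distribution on a finite type. -/
def IsDist {α : Type*} [Fintype α] (p : α → ℝ) : Prop :=
  (∀ x, 0 ≤ p x) ∧ ∑ x : α, p x = 1

/-- Two distributions are `γ`-close: all events get probabilities within `γ`. -/
def CloseTo {α : Type*} [Fintype α] (p q : α → ℝ) (γ : ℝ) : Prop :=
  ∀ S : Finset α, |∑ x ∈ S, p x - ∑ x ∈ S, q x| ≤ γ

/-- Pushforward of a distribution along a map. -/
noncomputable def push {α β : Type*} [Fintype α] [DecidableEq β] (h : α → β) (p : α → ℝ) :
    β → ℝ :=
  fun y => ∑ x : α, if h x = y then p x else 0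

/-!
If `z` has at least `ℓ` ones inside some `S i`, then some `ℓ`-subset `T` of that `S i` is all ones.
The marginal on `T` is `γ`-close to the product distribution, under which this event has
probability `d⁻ℓ`, and there are at most `t * C(d, ℓ)` such pairs `(i, T)`: the union bound gives
the first claim. Off that event, fixing the coordinates with `z j = 0` to `u` leaves each `φ i`
depending only on the fewer than `ℓ` coordinates of `S i` where `z j = 1`, which gives the second.
-/

section EventSums

variable {α : Type*} [Fintype α] {p : α → ℝ}

lemma sum_ite_le_sum_ite_of_imp (hp : ∀ x, 0 ≤ p x) {E F : α → Prop} [DecidablePred E]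
    [DecidablePred F] (hEF : ∀ x, E x → F x) :
    (∑ x, if E x then p x else 0) ≤ ∑ x, if F x then p x else 0 :=
  Finset.sum_le_sum fun x _ => by
    by_cases hE : E x
    · simp [hE, hEF x hE]
    · simp only [hE, if_false]
      split_ifs
      exacts [hp x, le_rfl]

lemma sum_ite_exists_mem_le {ι : Type*} (hp : ∀ x, 0 ≤ p x) (s : Finset ι)
    (E : ι → α → Prop) [∀ i, DecidablePred (E i)] [DecidablePred fun x => ∃ i ∈ s, E i x] :
    (∑ x, if ∃ i ∈ s, E i x then p x else 0) ≤ ∑ i ∈ s, ∑ x, if E i x then p x else 0 := by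
  have hterm : ∀ i x, 0 ≤ if E i x then p x else 0 := fun i x => by
    split_ifs
    exacts [hp x, le_rfl]
  rw [Finset.sum_comm]
  refine Finset.sum_le_sum fun x _ => ?_
  split_ifs with h
  · obtain ⟨i, hi, hE⟩ := h
    calc p x = if E i x then p x else 0 := (if_pos hE).symm
      _ ≤ _ := Finset.single_le_sum (fun j _ => hterm j x) hi
  · exact Finset.sum_nonneg fun i _ => hterm i x

lemma IsDist.sum_ite_not (hp : IsDist p) (E : α → Prop) [DecidablePred E] :
    (∑ x, if ¬E x then p x else 0) = 1 - ∑ x, if E x then p x else 0 := by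
  rw [eq_sub_iff_add_eq, ← Finset.sum_add_distrib, ← hp.2]
  refine Finset.sum_congr rfl fun x _ => ?_
  by_cases hE : E x <;> simp [hE]

end EventSums

lemma CloseTo.le_add {α : Type*} [Fintype α] {p q : α → ℝ} {γ : ℝ} (h : CloseTo p q γ) (y : α) :
    p y ≤ q y + γ := by
  have := (abs_le.mp (h {y})).2
  simp only [Finset.sum_singleton] at this
  linarith

lemma sum_ite_forall_mem_eq_le_of_closeTo {ι β : Type*} [Fintype ι] [DecidableEq ι] [Fintype β] [DecidableEq β]
    {p : (ι → β) → ℝ} {T : Finset ι} {w : β → ℝ} {γ : ℝ} {b : β}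
    [DecidablePred fun z : ι → β => ∀ j ∈ T, z j = b]
    (h : CloseTo (push (fun z : ι → β => fun j : {j : ι // j ∈ T} => z j.1) p)
      (fun v => ∏ j, w (v j)) γ) :
    (∑ z : ι → β, if ∀ j ∈ T, z j = b then p z else 0) ≤ γ + w b ^ T.card := by
  have hevent : ∀ z : ι → β, ((fun j : {j : ι // j ∈ T} => z j.1) = fun _ => b) ↔
      ∀ j ∈ T, z j = b := fun z => by simp [funext_iff]
  have := h.le_add fun _ => b
  simp only [push, hevent, Finset.prod_const, Finset.card_univ, Fintype.card_coe] at this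
  linarith

lemma le_card_filter_iff_exists_powersetCard {ι : Type*} {s : Finset ι} {P : ι → Prop}
    [DecidablePred P] {ℓ : ℕ} :
    ℓ ≤ (s.filter P).card ↔ ∃ T ∈ s.powersetCard ℓ, ∀ j ∈ T, P j := by
  constructor
  · intro h
    obtain ⟨T, hTsub, hTcard⟩ := Finset.exists_subset_card_eq h
    exact ⟨T, Finset.mem_powersetCard.mpr ⟨hTsub.trans (Finset.filter_subset _ _), hTcard⟩,
      fun j hj => (Finset.mem_filter.mp (hTsub hj)).2⟩
  · rintro ⟨T, hT, hP⟩
    rw [Finset.mem_powersetCard] at hT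
    rw [← hT.2]
    exact Finset.card_le_card fun j hj => Finset.mem_filter.mpr ⟨hT.1 hj, hP j hj⟩

lemma card_sigma_powersetCard_le {ι α : Type*} [Fintype ι] {S : ι → Finset α} {d : ℕ}
    (hS : ∀ i, (S i).card ≤ d) (ℓ : ℕ) :
    (Finset.univ.sigma fun i => (S i).powersetCard ℓ).card ≤ Fintype.card ι * d.choose ℓ := by
  rw [Finset.card_sigma, ← smul_eq_mul, ← Finset.card_univ]
  exact Finset.sum_le_card_nsmul _ _ _ fun i _ => by
    rw [Finset.card_powersetCard]
    exact Nat.choose_le_choose ℓ (hS i)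

lemma DependsOn.fix_coords {ι β γ : Type*} {f : (ι → β) → γ} {s : Set ι}
    (hf : DependsOn f s) (fixed : ι → Prop) [DecidablePred fixed] (u : ι → β) :
    DependsOn (fun x => f fun j => if fixed j then u j else x j) {j | j ∈ s ∧ ¬fixed j} :=
  fun x y hxy => hf fun j hj => by
    by_cases hfix : fixed j
    · simp only [hfix, if_true]
    · simp only [hfix, if_false]
      exact hxy j ⟨hj, hfix⟩

lemma exists_restriction_eq_sum_of_card_ones_lt {n t ℓ : ℕ} {S : Fin t → Finset (Fin n)}
    {φ : Fin t → (Fin n → ZMod 2) → ZMod 2} (hφ : ∀ i, DependsOn (φ i) (S i))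
    {z : Fin n → ZMod 2} (hz : ∀ i, ((S i).filter fun j => z j = 1).card < ℓ)
    (u : Fin n → ZMod 2) :
    ∃ ψ : Fin t → ((Fin n → ZMod 2) → ZMod 2),
      (∀ i, ∃ J : Finset (Fin n), J.card < ℓ ∧
        ∀ x y : Fin n → ZMod 2, (∀ j ∈ J, x j = y j) → ψ i x = ψ i y) ∧
      (∀ x : Fin n → ZMod 2,
        (∑ i, φ i (fun j => if z j = 0 then u j else x j)) = ∑ i, ψ i x) := by
  have hne_zero_iff : ∀ a : ZMod 2, ¬a = 0 ↔ a = 1 := by decide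
  refine ⟨fun i x => φ i fun j => if z j = 0 then u j else x j, fun i => ?_, fun _ => rfl⟩
  refine ⟨(S i).filter fun j => z j = 1, hz i, fun x y hxy => ?_⟩
  refine (hφ i).fix_coords (fun j => z j = 0) u fun j hj => hxy j ?_
  simpa [hne_zero_iff] using hj

lemma sum_ite_exists_le_card_filter_le {n d t ℓ : ℕ} {γ : ℝ} (hγ : 0 ≤ γ)
    {S : Fin t → Finset (Fin n)} (hS : ∀ i, (S i).card ≤ d)
    {p : (Fin n → ZMod 2) → ℝ} (hp : ∀ z, 0 ≤ p z)
    (hmarg : ∀ I : Finset (Fin n), I.card ≤ ℓ →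
      CloseTo (push (fun z : Fin n → ZMod 2 => fun j : {j : Fin n // j ∈ I} => z j.1) p)
        (fun v : {j : Fin n // j ∈ I} → ZMod 2 =>
          ∏ j, (if v j = 1 then (d : ℝ)⁻¹ else 1 - (d : ℝ)⁻¹)) γ) :
    (∑ z : Fin n → ZMod 2,
        if ∃ i, ℓ ≤ ((S i).filter (fun j => z j = 1)).card then p z else 0)
      ≤ (t : ℝ) * (d.choose ℓ) * (γ + ((d : ℝ)⁻¹) ^ ℓ) := by
  set 𝒯 := Finset.univ.sigma fun i => (S i).powersetCard ℓ
  have hbad : ∀ z : Fin n → ZMod 2, (∃ i, ℓ ≤ ((S i).filter (fun j => z j = 1)).card) →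
      ∃ T ∈ 𝒯, ∀ j ∈ T.2, z j = 1 := fun z ⟨i, hi⟩ => by
    obtain ⟨T, hT, hones⟩ := le_card_filter_iff_exists_powersetCard.mp hi
    exact ⟨⟨i, T⟩, Finset.mem_sigma.mpr ⟨Finset.mem_univ i, hT⟩, hones⟩
  calc _ ≤ ∑ z : Fin n → ZMod 2, if ∃ T ∈ 𝒯, ∀ j ∈ T.2, z j = 1 then p z else 0 :=
        sum_ite_le_sum_ite_of_imp hp hbad
    _ ≤ ∑ T ∈ 𝒯, ∑ z : Fin n → ZMod 2, if ∀ j ∈ T.2, z j = 1 then p z else 0 :=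
        sum_ite_exists_mem_le hp 𝒯 _
    _ ≤ ∑ _T ∈ 𝒯, (γ + ((d : ℝ)⁻¹) ^ ℓ) := Finset.sum_le_sum fun T hT => by
        have hcard := (Finset.mem_powersetCard.mp (Finset.mem_sigma.mp hT).2).2
        simpa only [hcard, if_true] using sum_ite_forall_mem_eq_le_of_closeTo (b := 1)
          (w := fun a => if a = 1 then (d : ℝ)⁻¹ else 1 - (d : ℝ)⁻¹) (hmarg T.2 hcard.le)
    _ = 𝒯.card * (γ + ((d : ℝ)⁻¹) ^ ℓ) := by rw [Finset.sum_const, nsmul_eq_mul]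
    _ ≤ (t : ℝ) * (d.choose ℓ) * (γ + ((d : ℝ)⁻¹) ^ ℓ) := by
        gcongr
        exact_mod_cast (card_sigma_powersetCard_le hS ℓ).trans_eq (by rw [Fintype.card_fin])

open Classical in
theorem stmt9_general
    (n d t ℓ : ℕ)
    (γ : ℝ) (hγ : 0 ≤ γ)
    (S : Fin t → Finset (Fin n)) (hS : ∀ i, (S i).card ≤ d)
    (p : (Fin n → ZMod 2) → ℝ) (hp : IsDist p)
    (hmarg : ∀ I : Finset (Fin n), I.card ≤ ℓ →
      CloseTo (push (fun z : Fin n → ZMod 2 => fun j : {j : Fin n // j ∈ I} => z j.1) p)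
        (fun v : {j : Fin n // j ∈ I} → ZMod 2 =>
          ∏ j, (if v j = 1 then (d : ℝ)⁻¹ else 1 - (d : ℝ)⁻¹)) γ) :
    ((∑ z : Fin n → ZMod 2,
        if ∃ i, ℓ ≤ ((S i).filter (fun j => z j = 1)).card then p z else 0)
      ≤ (t : ℝ) * (d.choose ℓ) * (γ + ((d : ℝ)⁻¹) ^ ℓ)) ∧
    (∀ (φ : Fin t → ((Fin n → ZMod 2) → ZMod 2)),
      (∀ i, ∀ x y : Fin n → ZMod 2, (∀ j ∈ S i, x j = y j) → φ i x = φ i y) →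
      1 - (t : ℝ) * (d.choose ℓ) * (γ + ((d : ℝ)⁻¹) ^ ℓ) ≤
        ∑ z : Fin n → ZMod 2,
          if (∀ u : Fin n → ZMod 2,
                ∃ ψ : Fin t → ((Fin n → ZMod 2) → ZMod 2),
                  (∀ i, ∃ J : Finset (Fin n), J.card < ℓ ∧
                    ∀ x y : Fin n → ZMod 2, (∀ j ∈ J, x j = y j) → ψ i x = ψ i y) ∧
                  (∀ x : Fin n → ZMod 2,
                    (∑ i, φ i (fun j => if z j = 0 then u j else x j)) = ∑ i, ψ i x))
            then p z else 0) := by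
  have hbad := sum_ite_exists_le_card_filter_le hγ hS hp.1 hmarg
  refine ⟨hbad, fun φ hφ => ?_⟩
  calc _ ≤ 1 - ∑ z : Fin n → ZMod 2,
          if ∃ i, ℓ ≤ ((S i).filter (fun j => z j = 1)).card then p z else 0 := by linarith
    _ = ∑ z : Fin n → ZMod 2,
          if ¬∃ i, ℓ ≤ ((S i).filter (fun j => z j = 1)).card then p z else 0 :=
        (hp.sum_ite_not _).symm
    _ ≤ _ := sum_ite_le_sum_ite_of_imp hp.1 fun z hz u =>
        exists_restriction_eq_sum_of_card_ones_lt (fun i x y => hφ i x y)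
          (by simpa only [not_exists, not_le] using hz) u

open Classical in
theorem stmt9
    (n d t ℓ : ℕ) (hn : 0 < n) (hd : 2 ≤ d) (ht : 0 < t) (hℓ : 0 < ℓ) (hℓd : ℓ ≤ d)
    (γ : ℝ) (hγ : 0 ≤ γ)
    (S : Fin t → Finset (Fin n)) (hS : ∀ i, (S i).card ≤ d)
    (p : (Fin n → ZMod 2) → ℝ) (hp : IsDist p)
    (hmarg : ∀ I : Finset (Fin n), I.card ≤ ℓ →
      CloseTo (push (fun z : Fin n → ZMod 2 => fun j : {j : Fin n // j ∈ I} => z j.1) p)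
        (fun v : {j : Fin n // j ∈ I} → ZMod 2 =>
          ∏ j, (if v j = 1 then (d : ℝ)⁻¹ else 1 - (d : ℝ)⁻¹)) γ) :
    ((∑ z : Fin n → ZMod 2,
        if ∃ i, ℓ ≤ ((S i).filter (fun j => z j = 1)).card then p z else 0)
      ≤ (t : ℝ) * (d.choose ℓ) * (γ + ((d : ℝ)⁻¹) ^ ℓ)) ∧
    (∀ (φ : Fin t → ((Fin n → ZMod 2) → ZMod 2)),
      (∀ i, ∀ x y : Fin n → ZMod 2, (∀ j ∈ S i, x j = y j) → φ i x = φ i y) →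
      1 - (t : ℝ) * (d.choose ℓ) * (γ + ((d : ℝ)⁻¹) ^ ℓ) ≤
        ∑ z : Fin n → ZMod 2,
          if (∀ u : Fin n → ZMod 2,
                ∃ ψ : Fin t → ((Fin n → ZMod 2) → ZMod 2),
                  (∀ i, ∃ J : Finset (Fin n), J.card < ℓ ∧
                    ∀ x y : Fin n → ZMod 2, (∀ j ∈ J, x j = y j) → ψ i x = ψ i y) ∧
                  (∀ x : Fin n → ZMod 2,
                    (∑ i, φ i (fun j => if z j = 0 then u j else x j)) = ∑ i, ψ i x))
            then p z else 0) :=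
  stmt9_general n d t ℓ γ hγ S hS p hp hmarg
end

section
/- Let n, s, ℓ be positive integers and γ ≥ 0. Let Z^{(1)},…,Z^{(s)} be independent random vectors in {0,1}^n such that for each r ∈ [s] and every set I ⊆ [n] with |I| ≤ ℓ, the marginal distribution of (Z^{(r)}_j)_{j∈I} is γ-close to the uniform distribution on {0,1}^I. Define Z ∈ {0,1}^n coordinatewise by Z_j = Z^{(1)}_j ∧ Z^{(2)}_j ∧ … ∧ Z^{(s)}_j. Then for every set I ⊆ [n] with |I| ≤ ℓ, the marginal distribution of (Z_j)_{j∈I} is (s·γ)-close to the product distribution on {0,1}^I in which each coordinate equals 1 independently with probability 2^{−s}. -/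
/-- The uniform distribution on a finite type. -/
noncomputable def unif (α : Type*) [Fintype α] : α → ℝ := fun _ => (Fintype.card α : ℝ)⁻¹

/-!
Restricted to `I`, the coordinatewise AND is a function of the `s` independent marginals on
`{0,1}^I`, so the law of `Z|_I` is the pushforward under conjunction of the product of those
marginals. Closeness is preserved by pushforwards and adds up along a product of distributions
(replace one factor at a time), so that product is `s γ`-close to the product of uniform
distributions. Under the latter, transposing rounds and coordinates shows that the conjunctions
at distinct coordinates are independent, each equal to `1` with probability `2^{-s}`.
-/

open Finset

section Push

variable {α β γ : Type*} [Fintype α] [DecidableEq β]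

theorem sum_push (h : α → β) (p : α → ℝ) (S : Finset β) :
    ∑ y ∈ S, push h p y = ∑ x ∈ univ.filter (fun x => h x ∈ S), p x := by
  simp only [push, sum_filter]
  rw [sum_comm]
  exact sum_congr rfl fun x _ => by simp

theorem push_comp [Fintype β] [DecidableEq γ] (g : β → γ) (h : α → β) (p : α → ℝ) :
    push (g ∘ h) p = push g (push h p) := by
  funext c
  change _ = ∑ b, if g b = c then push h p b else 0
  rw [← sum_filter, sum_push]
  simp [push, sum_filter]

theorem push_equiv [DecidableEq α] (e : α ≃ β) (p : α → ℝ) : push e p = p ∘ e.symm := by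
  funext y
  simp [push, ← e.eq_symm_apply]

variable [Fintype β]

theorem IsDist.push {p : α → ℝ} (hp : IsDist p) (h : α → β) : IsDist (push h p) := by
  refine ⟨fun y => sum_nonneg fun x _ => ?_, by simpa [sum_push] using hp.2⟩
  split_ifs
  exacts [hp.1 x, le_rfl]

theorem CloseTo.push {p q : α → ℝ} {ε : ℝ} (hpq : CloseTo p q ε) (h : α → β) :
    CloseTo (push h p) (push h q) ε := by
  intro S
  rw [sum_push, sum_push]
  exact hpq _

end Push

section Pi

variable {ι : Type*} [Fintype ι] [DecidableEq ι] {α β : ι → Type*} [∀ i, Fintype (α i)]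

theorem push_pi [∀ i, DecidableEq (β i)] (h : ∀ i, α i → β i) (p : ∀ i, α i → ℝ) :
    push (fun (x : ∀ i, α i) i => h i (x i)) (fun x => ∏ i, p i (x i)) =
      fun y => ∏ i, push (h i) (p i) (y i) := by
  funext y
  simp only [push, Fintype.prod_sum, Fintype.prod_ite_zero, funext_iff]

theorem IsDist.pi {p : ∀ i, α i → ℝ} (hp : ∀ i, IsDist (p i)) :
    IsDist (fun x : ∀ i, α i => ∏ i, p i (x i)) :=
  ⟨fun x => prod_nonneg fun i _ => (hp i).1 _, by
    rw [← Fintype.prod_sum]; exact prod_eq_one fun i _ => (hp i).2⟩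

theorem unif_pi (x : ∀ i, α i) : unif (∀ i, α i) x = ∏ i, unif (α i) (x i) := by
  simp [unif, Fintype.card_pi]

end Pi

theorem isDist_unif (α : Type*) [Fintype α] [Nonempty α] : IsDist (unif α) :=
  ⟨fun _ => by unfold unif; positivity, by simp [unif]⟩

theorem push_unif_equiv {α β : Type*} [Fintype α] [Fintype β] [DecidableEq α] [DecidableEq β]
    (e : α ≃ β) : push e (unif α) = unif β := by
  funext y
  simp [push_equiv, unif, Fintype.card_congr e]

theorem IsDist.abs_sum_mul_le {α : Type*} [Fintype α] {w : α → ℝ} (hw : IsDist w)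
    {g : α → ℝ} {ε : ℝ} (hg : ∀ a, |g a| ≤ ε) : |∑ a, w a * g a| ≤ ε :=
  calc |∑ a, w a * g a| ≤ ∑ a, w a * ε :=
        (abs_sum_le_sum_abs _ _).trans <| sum_le_sum fun a _ => by
          rw [abs_mul, abs_of_nonneg (hw.1 a)]; exact mul_le_mul_of_nonneg_left (hg a) (hw.1 a)
    _ = ε := by rw [← sum_mul, hw.2, one_mul]

theorem CloseTo.prod {α β : Type*} [Fintype α] [Fintype β] {p p' : α → ℝ} {q q' : β → ℝ}
    {ε δ : ℝ} (hp : IsDist p) (hq' : IsDist q') (hpp' : CloseTo p p' ε) (hqq' : CloseTo q q' δ) :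
    CloseTo (fun x : α × β => p x.1 * q x.2) (fun x => p' x.1 * q' x.2) (ε + δ) := by
  classical
  intro S
  set T : α → Finset β := fun a => univ.filter fun b => (a, b) ∈ S
  set U : β → Finset α := fun b => univ.filter fun a => (a, b) ∈ S
  -- Hybrid through `p ⊗ q'`: change the second factor, then the first.
  have hsecond : ∑ x ∈ S, p x.1 * q x.2 - ∑ x ∈ S, p x.1 * q' x.2 =
      ∑ a, p a * (∑ b ∈ T a, q b - ∑ b ∈ T a, q' b) := by
    have hT : ∀ x : α × β, x ∈ S ↔ x.1 ∈ univ ∧ x.2 ∈ T x.1 := by simp [T]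
    rw [sum_finset_product S univ T hT, sum_finset_product S univ T hT, ← sum_sub_distrib]
    simp only [mul_sub, mul_sum, sum_sub_distrib]
  have hfirst : ∑ x ∈ S, p x.1 * q' x.2 - ∑ x ∈ S, p' x.1 * q' x.2 =
      ∑ b, q' b * (∑ a ∈ U b, p a - ∑ a ∈ U b, p' a) := by
    have hU : ∀ x : α × β, x ∈ S ↔ x.2 ∈ univ ∧ x.1 ∈ U x.2 := by simp [U]
    rw [sum_finset_product_right S univ U hU, sum_finset_product_right S univ U hU,
      ← sum_sub_distrib]
    simp only [mul_sub, mul_sum, sum_sub_distrib, mul_comm]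
  calc _ ≤ |∑ x ∈ S, p x.1 * q x.2 - ∑ x ∈ S, p x.1 * q' x.2| +
        |∑ x ∈ S, p x.1 * q' x.2 - ∑ x ∈ S, p' x.1 * q' x.2| := abs_sub_le _ _ _
    _ ≤ δ + ε := by
        rw [hsecond, hfirst]
        exact add_le_add (hp.abs_sum_mul_le fun a => hqq' _) (hq'.abs_sum_mul_le fun b => hpp' _)
    _ = ε + δ := add_comm _ _

theorem CloseTo.comp_equiv {α β : Type*} [Fintype α] [Fintype β] {p q : α → ℝ} {ε : ℝ}
    (hpq : CloseTo p q ε) (e : β ≃ α) : CloseTo (p ∘ e) (q ∘ e) ε := by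
  intro S
  simpa [sum_map] using hpq (S.map e.toEmbedding)

theorem CloseTo.pi {s : ℕ} {α : Fin s → Type*} [∀ i, Fintype (α i)] {p q : ∀ i, α i → ℝ}
    {ε : Fin s → ℝ} (hp : ∀ i, IsDist (p i)) (hq : ∀ i, IsDist (q i))
    (hpq : ∀ i, CloseTo (p i) (q i) (ε i)) :
    CloseTo (fun x : ∀ i, α i => ∏ i, p i (x i)) (fun x => ∏ i, q i (x i)) (∑ i, ε i) := by
  induction s with
  | zero => intro S; simp
  | succ s ih =>
    have hsplit := (CloseTo.prod (hp 0) (IsDist.pi fun i => hq i.succ) (hpq 0)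
      (ih (fun i => hp i.succ) (fun i => hq i.succ) fun i => hpq i.succ)).comp_equiv
      (Fin.consEquiv α).symm
    rw [Fin.sum_univ_succ]
    convert hsplit using 1 <;> funext x <;> simp [Fin.prod_univ_succ, Fin.tail]

-- The decidability instance is a parameter so that these lemmas match the instance
-- `Nat.decidableForallFin` elaborated for `κ = Fin s`.
theorem push_forall_unif (κ : Type*) [Fintype κ] [DecidableEq κ]
    [∀ x : κ → Bool, Decidable (∀ r, x r = true)] (b : Bool) :
    push (fun x : κ → Bool => decide (∀ r, x r = true)) (unif (κ → Bool)) b =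
      if b then (2⁻¹ : ℝ) ^ Fintype.card κ else 1 - (2⁻¹ : ℝ) ^ Fintype.card κ := by
  set P := push (fun x : κ → Bool => decide (∀ r, x r = true)) (unif (κ → Bool))
  have htrue : P true = (2⁻¹ : ℝ) ^ Fintype.card κ := by
    have hall : ∀ x : κ → Bool, decide (∀ r, x r = true) = true ↔ x = fun _ => true := by
      simp [funext_iff]
    simp [P, push, hall, unif]
  have htotal : P true + P false = 1 := by
    simpa using ((isDist_unif (κ → Bool)).push fun x : κ → Bool => decide (∀ r, x r = true)).2
  cases b
  · simp only [Bool.false_eq_true, if_false]; linarith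
  · simpa using htrue

theorem push_forall_prod_unif (κ ι : Type*) [Fintype κ] [DecidableEq κ]
    [∀ x : κ → Bool, Decidable (∀ r, x r = true)] [Fintype ι] [DecidableEq ι] :
    push (fun (w : κ → ι → Bool) j => decide (∀ r, w r j = true))
        (fun w => ∏ r, unif (ι → Bool) (w r)) =
      fun v => ∏ j, if v j then (2⁻¹ : ℝ) ^ Fintype.card κ else 1 - (2⁻¹ : ℝ) ^ Fintype.card κ := by
  have hswap : (fun (w : κ → ι → Bool) j => decide (∀ r, w r j = true)) =
      (fun (u : ι → κ → Bool) j => decide (∀ r, u j r = true)) ∘ Equiv.piComm _ := rfl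
  rw [← funext unif_pi, hswap, push_comp, push_unif_equiv, funext unif_pi]
  refine (push_pi (fun (_ : ι) x => decide (∀ r, x r = true)) fun _ => unif (κ → Bool)).trans ?_
  simp only [push_forall_unif]

theorem stmt12_general
    (n s ℓ : ℕ)
    (γ : ℝ)
    (p : Fin s → ((Fin n → Bool) → ℝ)) (hdist : ∀ r, IsDist (p r))
    (hmarg : ∀ r : Fin s, ∀ I : Finset (Fin n), I.card ≤ ℓ →
      CloseTo
        (push (fun z : Fin n → Bool => fun j : {j : Fin n // j ∈ I} => z j.1) (p r))
        (unif ({j : Fin n // j ∈ I} → Bool)) γ) :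
    ∀ I : Finset (Fin n), I.card ≤ ℓ →
      CloseTo
        (push
          (fun z : Fin s → (Fin n → Bool) =>
            fun j : {j : Fin n // j ∈ I} => decide (∀ r : Fin s, z r j.1 = true))
          (fun z : Fin s → (Fin n → Bool) => ∏ r, p r (z r)))
        (fun v : {j : Fin n // j ∈ I} → Bool =>
          ∏ j, (if v j then ((2:ℝ)⁻¹) ^ s else 1 - ((2:ℝ)⁻¹) ^ s))
        (s * γ) := by
  intro I hI
  have hprod := (CloseTo.pi (fun r => (hdist r).push fun (z : Fin n → Bool) (j : I) => z j.1)
    (fun _ => isDist_unif _) fun r => hmarg r I hI).push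
      fun (w : Fin s → I → Bool) j => decide (∀ r, w r j = true)
  have htarget := push_forall_prod_unif (Fin s) I
  rw [Fintype.card_fin] at htarget
  rw [htarget, ← push_pi, ← push_comp] at hprod
  rwa [Fin.sum_const, nsmul_eq_mul] at hprod

theorem stmt12
    (n s ℓ : ℕ) (hn : 0 < n) (hs : 0 < s) (hℓ : 0 < ℓ)
    (γ : ℝ) (hγ : 0 ≤ γ)
    (p : Fin s → ((Fin n → Bool) → ℝ)) (hdist : ∀ r, IsDist (p r))
    (hmarg : ∀ r : Fin s, ∀ I : Finset (Fin n), I.card ≤ ℓ →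
      CloseTo
        (push (fun z : Fin n → Bool => fun j : {j : Fin n // j ∈ I} => z j.1) (p r))
        (unif ({j : Fin n // j ∈ I} → Bool)) γ) :
    ∀ I : Finset (Fin n), I.card ≤ ℓ →
      CloseTo
        (push
          (fun z : Fin s → (Fin n → Bool) =>
            fun j : {j : Fin n // j ∈ I} => decide (∀ r : Fin s, z r j.1 = true))
          (fun z : Fin s → (Fin n → Bool) => ∏ r, p r (z r)))
        (fun v : {j : Fin n // j ∈ I} → Bool =>
          ∏ j, (if v j then ((2:ℝ)⁻¹) ^ s else 1 - ((2:ℝ)⁻¹) ^ s))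
        (s * γ) :=
  stmt12_general n s ℓ γ p hdist hmarg
end
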